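/- Let F be a nonarchimedean local field with maximal ideal p and uniformizer ϖ, m ≥ 1, n ≥ 1, d = diag(1, ϖ², ..., ϖ^{2n-2}), and J_m = d^m (I + M_n(p^m)) d^{-m}. Set N_m = N_n ∩ J_m, A_m = A_n ∩ J_m, N̄_m = N̄_n ∩ J_m, B̄_m = (N̄_n A_n) ∩ J_m. Then J_m admits the Iwahori factorizations J_m = N̄_m A_m N_m = B̄_m N_m = N_m B̄_m, and the expression j = b̄ n with b̄ ∈ B̄_m, n ∈ N_m is unique. -/

import Mathlib

/-
`J_m` is the set of `g` with `‖g i j - δ i j‖ ≤ w i j`, where `w i j = p^(-m(1 + 2(i - j)))`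
satisfies `w i l * w l j ≤ w i j` and `w i i < 1`. For any such weight the ultrametric inequality
makes the set closed under products and forces every diagonal entry to be a unit. Eliminating
with the pivot `g 0 0` leaves a Schur complement obeying the same bounds for the weight restricted
to the remaining indices, so induction on `n` gives `g = b̄ u` with both factors in the set.
Conjugating by the antidiagonal transpose, which reverses products and preserves both triangular
shapes, turns this into `g = u b̄`. Uniqueness holds because `b₂⁻¹ b₁ = u₂ u₁⁻¹` lies in
`B̄ ∩ N = {1}`.
-/

open Matrix

/-- Upper triangular unipotent matrix. -/
def IsUpperUnip {F : Type*} [Zero F] [One F] {k : ℕ} (M : Matrix (Fin k) (Fin k) F) : Prop :=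
  (∀ i j : Fin k, j < i → M i j = 0) ∧ ∀ i, M i i = 1

/-- Lower triangular unipotent matrix. -/
def IsLowerUnip {F : Type*} [Zero F] [One F] {k : ℕ} (M : Matrix (Fin k) (Fin k) F) : Prop :=
  (∀ i j : Fin k, i < j → M i j = 0) ∧ ∀ i, M i i = 1

/-- Lower triangular matrix. -/
def IsLowerTri {F : Type*} [Zero F] {k : ℕ} (M : Matrix (Fin k) (Fin k) F) : Prop :=
  ∀ i j : Fin k, i < j → M i j = 0

/-- Diagonal matrix. -/
def IsDiagMat {F : Type*} [Zero F] {k : ℕ} (M : Matrix (Fin k) (Fin k) F) : Prop :=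
  ∀ i j : Fin k, i ≠ j → M i j = 0

/-- `d^s` where `d = diag(1, p², p⁴, ..., p^{2n-2})`. -/
noncomputable def dpow (p : ℕ) [Fact p.Prime] (n : ℕ) (s : ℤ) :
    Matrix (Fin n) (Fin n) ℚ_[p] :=
  Matrix.diagonal fun i => (p : ℚ_[p]) ^ (2 * (i : ℤ) * s)

/-- The principal congruence subgroup `K^m = I + M_n(p^m)`. -/
def Km (p : ℕ) [Fact p.Prime] (n m : ℕ) : Set (Matrix (Fin n) (Fin n) ℚ_[p]) :=
  {g | ∀ i j, ‖g i j - (1 : Matrix (Fin n) (Fin n) ℚ_[p]) i j‖ ≤ (p : ℝ) ^ (-(m : ℤ))}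

/-- `J_m = d^m K^m d^{-m}`. -/
noncomputable def Jm (p : ℕ) [Fact p.Prime] (n m : ℕ) :
    Set (Matrix (Fin n) (Fin n) ℚ_[p]) :=
  (fun k => dpow p n (m : ℤ) * k * dpow p n (-(m : ℤ))) '' Km p n m

structure IsCongruenceWeight {n : ℕ} (W : Matrix (Fin n) (Fin n) ℝ) : Prop where
  nonneg : ∀ i j, 0 ≤ W i j
  mul_le : ∀ i l j, W i l * W l j ≤ W i j
  diag_lt_one : ∀ i, W i i < 1

def congruenceSet (K : Type*) [Norm K] [Ring K] {n : ℕ} (W : Matrix (Fin n) (Fin n) ℝ) :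
    Set (Matrix (Fin n) (Fin n) K) :=
  {g | ∀ i j, ‖(g - 1) i j‖ ≤ W i j}

namespace Matrix

variable {α : Type*} {n : ℕ}

-- The matrix `[[a, r], [c, M]]`, with `a` in the corner `(0, 0)`.
def blockCons (a : α) (r c : Fin n → α) (M : Matrix (Fin n) (Fin n) α) :
    Matrix (Fin (n + 1)) (Fin (n + 1)) α :=
  of (Fin.cons (Fin.cons a r) fun i => Fin.cons (c i) (M i))

section Apply

variable (a : α) (r c : Fin n → α) (M : Matrix (Fin n) (Fin n) α) (i j : Fin n)

@[simp] lemma blockCons_zero_zero : blockCons a r c M 0 0 = a := rfl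
@[simp] lemma blockCons_zero_succ : blockCons a r c M 0 j.succ = r j := rfl
@[simp] lemma blockCons_succ_zero : blockCons a r c M i.succ 0 = c i := rfl
@[simp] lemma blockCons_succ_succ : blockCons a r c M i.succ j.succ = M i j := rfl

end Apply

lemma blockCons_eta (M : Matrix (Fin (n + 1)) (Fin (n + 1)) α) :
    blockCons (M 0 0) (fun j => M 0 j.succ) (fun i => M i.succ 0) (M.submatrix Fin.succ Fin.succ)
      = M := by
  ext i j
  cases i using Fin.cases <;> cases j using Fin.cases <;> rfl

lemma blockCons_one [Zero α] [One α] :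
    blockCons (1 : α) 0 0 (1 : Matrix (Fin n) (Fin n) α) = 1 := by
  ext i j
  cases i using Fin.cases <;> cases j using Fin.cases <;>
    simp [one_apply, Fin.succ_ne_zero, (Fin.succ_ne_zero _).symm]

lemma blockCons_sub [Sub α] (a a' : α) (r r' c c' : Fin n → α)
    (M M' : Matrix (Fin n) (Fin n) α) :
    blockCons a r c M - blockCons a' r' c' M' = blockCons (a - a') (r - r') (c - c') (M - M') := by
  ext i j
  cases i using Fin.cases <;> cases j using Fin.cases <;> rfl

lemma blockCons_mul [Semiring α] (a a' : α) (r r' c c' : Fin n → α)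
    (M M' : Matrix (Fin n) (Fin n) α) :
    blockCons a r c M * blockCons a' r' c' M'
      = blockCons (a * a' + r ⬝ᵥ c') (a • r' + r ᵥ* M') (fun i => c i * a' + (M *ᵥ c') i)
          (vecMulVec c r' + M * M') := by
  ext i j
  cases i using Fin.cases <;> cases j using Fin.cases <;>
    simp [mul_apply, Fin.sum_univ_succ, dotProduct, vecMul, mulVec, vecMulVec]

def antitranspose (A : Matrix (Fin n) (Fin n) α) : Matrix (Fin n) (Fin n) α :=
  (A.submatrix Fin.rev Fin.rev)ᵀ

@[simp] lemma antitranspose_apply (A : Matrix (Fin n) (Fin n) α) (i j : Fin n) :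
    A.antitranspose i j = A j.rev i.rev := rfl

@[simp] lemma antitranspose_antitranspose (A : Matrix (Fin n) (Fin n) α) :
    A.antitranspose.antitranspose = A := by
  ext
  simp

lemma antitranspose_mul [CommSemiring α] (A B : Matrix (Fin n) (Fin n) α) :
    (A * B).antitranspose = B.antitranspose * A.antitranspose := by
  rw [antitranspose, submatrix_mul A B _ _ _ Fin.rev_involutive.bijective, transpose_mul]
  rfl

lemma antitranspose_sub_one [Ring α] (A : Matrix (Fin n) (Fin n) α) :
    A.antitranspose - 1 = (A - 1).antitranspose := by
  ext i j
  simp [one_apply, Fin.rev_inj, eq_comm]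

lemma IsUpperTriangular.mul_apply_self {m : Type*} [LinearOrder m] [Fintype m]
    [NonUnitalNonAssocSemiring α] {A B : Matrix m m α} (hA : A.IsUpperTriangular)
    (hB : B.IsUpperTriangular) (i : m) : (A * B) i i = A i i * B i i := by
  rw [mul_apply]
  refine Finset.sum_eq_single i (fun l _ hl => ?_) (by simp)
  rcases hl.lt_or_gt with h | h
  · rw [hA h, zero_mul]
  · rw [hB h, mul_zero]

end Matrix

section Shapes

variable {α : Type*} {n : ℕ} {A : Matrix (Fin n) (Fin n) α}

lemma IsLowerTri.blockCons [Zero α] (hA : IsLowerTri A) (a : α) (c : Fin n → α) :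
    IsLowerTri (blockCons a 0 c A) := by
  intro i j hij
  cases i using Fin.cases <;> cases j using Fin.cases
  · exact absurd hij (lt_irrefl _)
  · rfl
  · exact absurd hij (Fin.not_lt_zero _)
  · exact hA _ _ (Fin.succ_lt_succ_iff.1 hij)

lemma IsUpperUnip.blockCons [Zero α] [One α] (hA : IsUpperUnip A) (r : Fin n → α) :
    IsUpperUnip (blockCons 1 r 0 A) := by
  refine ⟨fun i j hij => ?_, fun i => ?_⟩
  · cases i using Fin.cases <;> cases j using Fin.cases
    · exact absurd hij (lt_irrefl _)
    · exact absurd hij (Fin.not_lt_zero _)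
    · rfl
    · exact hA.1 _ _ (Fin.succ_lt_succ_iff.1 hij)
  · cases i using Fin.cases
    · rfl
    · exact hA.2 _

lemma IsLowerTri.antitranspose [Zero α] (hA : IsLowerTri A) : IsLowerTri A.antitranspose :=
  fun _ _ hij => hA _ _ (Fin.rev_lt_rev.2 hij)

lemma IsUpperUnip.antitranspose [Zero α] [One α] (hA : IsUpperUnip A) :
    IsUpperUnip A.antitranspose :=
  ⟨fun _ _ hij => hA.1 _ _ (Fin.rev_lt_rev.2 hij), fun _ => hA.2 _⟩

end Shapes

theorem lowerTri_mul_upperUnip_inj {K : Type*} [Field K] {n : ℕ}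
    {b₁ b₂ u₁ u₂ : Matrix (Fin n) (Fin n) K} (hb₁ : IsLowerTri b₁) (hb₂ : IsLowerTri b₂)
    (hb₂0 : ∀ i, b₂ i i ≠ 0) (hu₁ : IsUpperUnip u₁) (hu₂ : IsUpperUnip u₂)
    (h : b₁ * u₁ = b₂ * u₂) : b₁ = b₂ ∧ u₁ = u₂ := by
  have hb₁' : b₁.IsLowerTriangular := fun i j hij => hb₁ i j hij
  have hb₂' : b₂.IsLowerTriangular := fun i j hij => hb₂ i j hij
  have hu₁' : u₁.IsUpperTriangular := fun i j hij => hu₁.1 i j hij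
  have hu₂' : u₂.IsUpperTriangular := fun i j hij => hu₂.1 i j hij
  have : Invertible b₂ := invertibleOfIsUnitDet _ <| by
    rw [det_of_isLowerTriangular _ hb₂']
    exact (Finset.prod_ne_zero_iff.2 fun i _ => hb₂0 i).isUnit
  have : Invertible u₁ := invertibleOfIsUnitDet _ <| by
    simp [det_of_isUpperTriangular hu₁', hu₁.2]
  have hu₁inv : u₁⁻¹.IsUpperTriangular := blockTriangular_inv_of_blockTriangular hu₁'
  have hc : b₂⁻¹ * b₁ = u₂ * u₁⁻¹ := by
    calc b₂⁻¹ * b₁ = b₂⁻¹ * (b₁ * u₁) * u₁⁻¹ := by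
          rw [Matrix.mul_assoc, Matrix.mul_assoc, mul_inv_of_invertible, Matrix.mul_one]
      _ = u₂ * u₁⁻¹ := by rw [h, ← Matrix.mul_assoc, inv_mul_of_invertible, Matrix.one_mul]
  -- `hc` exhibits this matrix as both lower triangular and upper unipotent.
  have hc1 : u₂ * u₁⁻¹ = 1 := by
    ext i j
    rcases lt_trichotomy i j with hij | rfl | hij
    · rw [← hc, ((blockTriangular_inv_of_blockTriangular hb₂').mul hb₁') hij,
        one_apply_ne hij.ne]
    · have hdiag := congr_fun₂ (inv_mul_of_invertible u₁) i i
      rw [hu₁inv.mul_apply_self hu₁', hu₁.2, mul_one] at hdiag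
      rw [hu₂'.mul_apply_self hu₁inv, hu₂.2, one_mul, hdiag]
    · rw [(hu₂'.mul hu₁inv) hij, one_apply_ne hij.ne']
  constructor
  · calc b₁ = b₂ * (b₂⁻¹ * b₁) := by
          rw [← Matrix.mul_assoc, mul_inv_of_invertible, Matrix.one_mul]
      _ = b₂ := by rw [hc, hc1, Matrix.mul_one]
  · calc u₁ = u₂ * u₁⁻¹ * u₁ := by rw [hc1, Matrix.one_mul]
      _ = u₂ := by rw [Matrix.mul_assoc, inv_mul_of_invertible, Matrix.mul_one]

namespace IsCongruenceWeight

variable {n : ℕ} {W : Matrix (Fin n) (Fin n) ℝ}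

lemma submatrix {m : ℕ} (hW : IsCongruenceWeight W) (f : Fin m → Fin n) :
    IsCongruenceWeight (W.submatrix f f) where
  nonneg i j := hW.nonneg (f i) (f j)
  mul_le i l j := hW.mul_le (f i) (f l) (f j)
  diag_lt_one i := hW.diag_lt_one (f i)

lemma antitranspose (hW : IsCongruenceWeight W) : IsCongruenceWeight W.antitranspose where
  nonneg i j := hW.nonneg _ _
  mul_le i l j := by
    rw [antitranspose_apply, antitranspose_apply, mul_comm]
    exact hW.mul_le _ _ _
  diag_lt_one i := hW.diag_lt_one _

end IsCongruenceWeight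

section Ring

variable {K : Type*} [Norm K] [Ring K] {n : ℕ}

lemma blockCons_mem_congruenceSet_iff {W : Matrix (Fin (n + 1)) (Fin (n + 1)) ℝ} {a : K}
    {r c : Fin n → K} {M : Matrix (Fin n) (Fin n) K} :
    blockCons a r c M ∈ congruenceSet K W ↔ ‖a - 1‖ ≤ W 0 0 ∧ (∀ j, ‖r j‖ ≤ W 0 j.succ) ∧
      (∀ i, ‖c i‖ ≤ W i.succ 0) ∧ M ∈ congruenceSet K (W.submatrix Fin.succ Fin.succ) := by
  simp only [congruenceSet, Set.mem_ofPred_eq, ← blockCons_one, blockCons_sub,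
    Fin.forall_fin_succ, blockCons_zero_zero, blockCons_zero_succ, blockCons_succ_zero,
    blockCons_succ_succ, sub_zero, submatrix_apply, forall_and, and_assoc]
  tauto

lemma antitranspose_mem_congruenceSet {W : Matrix (Fin n) (Fin n) ℝ}
    {g : Matrix (Fin n) (Fin n) K} (hg : g ∈ congruenceSet K W) :
    g.antitranspose ∈ congruenceSet K W.antitranspose := by
  intro i j
  rw [antitranspose_sub_one]
  exact hg _ _

end Ring

section NormedRing

variable {K : Type*} [NormedRing K] {n : ℕ} {W : Matrix (Fin n) (Fin n) ℝ}

lemma diagonal_mem_congruenceSet (hW : IsCongruenceWeight W) {d : Fin n → K}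
    (hd : ∀ i, ‖d i - 1‖ ≤ W i i) : diagonal d ∈ congruenceSet K W := by
  intro i j
  rcases eq_or_ne i j with rfl | hij
  · simpa using hd i
  · simpa [hij] using hW.nonneg i j

variable [IsUltrametricDist K]

lemma norm_mul_apply_le {x y : Matrix (Fin n) (Fin n) K} (hW : IsCongruenceWeight W)
    (hx : ∀ i j, ‖x i j‖ ≤ W i j) (hy : ∀ i j, ‖y i j‖ ≤ W i j) (i j : Fin n) :
    ‖(x * y) i j‖ ≤ W i j := by
  rw [mul_apply]
  exact IsUltrametricDist.norm_sum_le_of_forall_le_of_nonneg (hW.nonneg i j) fun l _ =>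
    (norm_mul_le _ _).trans <|
      (mul_le_mul (hx i l) (hy l j) (norm_nonneg _) (hW.nonneg i l)).trans (hW.mul_le i l j)

lemma mul_mem_congruenceSet {g h : Matrix (Fin n) (Fin n) K} (hW : IsCongruenceWeight W)
    (hg : g ∈ congruenceSet K W) (hh : h ∈ congruenceSet K W) : g * h ∈ congruenceSet K W := by
  intro i j
  have hsplit : g * h - 1 = (g - 1) * (h - 1) + (g - 1) + (h - 1) := by noncomm_ring
  rw [hsplit]
  refine (IsUltrametricDist.norm_add_le_max _ _).trans (max_le ?_ (hh i j))
  exact (IsUltrametricDist.norm_add_le_max _ _).trans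
    (max_le (norm_mul_apply_le hW hg hh i j) (hg i j))

lemma norm_eq_one_of_norm_sub_one_lt [NormOneClass K] {x : K} (hx : ‖x - 1‖ < 1) : ‖x‖ = 1 := by
  have h := IsUltrametricDist.norm_add_eq_max_of_norm_ne_norm (x := x - 1) (y := 1)
    (by rw [norm_one]; exact hx.ne)
  rwa [sub_add_cancel, norm_one, max_eq_right hx.le] at h

end NormedRing

section NormedField

variable {K : Type*} [NormedField K] [IsUltrametricDist K] {n : ℕ}

lemma norm_apply_eq_one_of_mem_congruenceSet {W : Matrix (Fin n) (Fin n) ℝ}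
    (hW : IsCongruenceWeight W) {g : Matrix (Fin n) (Fin n) K} (hg : g ∈ congruenceSet K W)
    (i : Fin n) : ‖g i i‖ = 1 :=
  norm_eq_one_of_norm_sub_one_lt <| by
    simpa using (hg i i).trans_lt (hW.diag_lt_one i)

lemma apply_ne_zero_of_mem_congruenceSet {W : Matrix (Fin n) (Fin n) ℝ}
    (hW : IsCongruenceWeight W) {g : Matrix (Fin n) (Fin n) K} (hg : g ∈ congruenceSet K W)
    (i : Fin n) : g i i ≠ 0 :=
  norm_ne_zero_iff.1 <| by simp [norm_apply_eq_one_of_mem_congruenceSet hW hg i]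

lemma sub_vecMulVec_mem_congruenceSet {W : Matrix (Fin (n + 1)) (Fin (n + 1)) ℝ}
    (hW : IsCongruenceWeight W) {r c : Fin n → K} {M : Matrix (Fin n) (Fin n) K}
    (hr : ∀ j, ‖r j‖ ≤ W 0 j.succ) (hc : ∀ i, ‖c i‖ ≤ W i.succ 0)
    (hM : M ∈ congruenceSet K (W.submatrix Fin.succ Fin.succ)) :
    M - vecMulVec c r ∈ congruenceSet K (W.submatrix Fin.succ Fin.succ) := by
  intro i j
  rw [sub_right_comm, Matrix.sub_apply, sub_eq_add_neg]
  refine (IsUltrametricDist.norm_add_le_max _ _).trans (max_le (hM i j) ?_)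
  rw [norm_neg, vecMulVec_apply, norm_mul]
  exact (mul_le_mul (hc i) (hr j) (norm_nonneg _) (hW.nonneg _ _)).trans (hW.mul_le _ _ _)

theorem exists_lowerTri_mul_upperUnip {W : Matrix (Fin n) (Fin n) ℝ} (hW : IsCongruenceWeight W)
    {g : Matrix (Fin n) (Fin n) K} (hg : g ∈ congruenceSet K W) :
    ∃ b u : Matrix (Fin n) (Fin n) K, (b ∈ congruenceSet K W ∧ IsLowerTri b) ∧
      (u ∈ congruenceSet K W ∧ IsUpperUnip u) ∧ g = b * u := by
  induction n with
  | zero =>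
    exact ⟨1, 1, ⟨finZeroElim, finZeroElim⟩, ⟨finZeroElim, finZeroElim, finZeroElim⟩,
      Subsingleton.elim _ _⟩
  | succ n ih =>
    rw [← blockCons_eta g] at hg ⊢
    set a := g 0 0
    set r := fun j => g 0 (Fin.succ j)
    set c := fun i => g (Fin.succ i) 0
    obtain ⟨ha, hr, hc, hG⟩ := blockCons_mem_congruenceSet_iff.1 hg
    have ha_norm : ‖a‖ = 1 := by simpa using norm_apply_eq_one_of_mem_congruenceSet hW hg 0
    have ha0 : a ≠ 0 := by simpa using apply_ne_zero_of_mem_congruenceSet hW hg 0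
    have hr' : ∀ j, ‖(a⁻¹ • r) j‖ ≤ W 0 j.succ := fun j => by
      simpa [norm_inv, ha_norm] using hr j
    -- The Schur complement of the pivot `a`.
    obtain ⟨b', u', ⟨hb'W, hb'⟩, ⟨hu'W, hu'⟩, hbu⟩ :=
      ih (hW.submatrix Fin.succ) (sub_vecMulVec_mem_congruenceSet hW hr' hc hG)
    refine ⟨blockCons a 0 c b', blockCons 1 (a⁻¹ • r) 0 u', ⟨?_, hb'.blockCons a c⟩,
      ⟨?_, hu'.blockCons _⟩, ?_⟩
    · exact blockCons_mem_congruenceSet_iff.2 ⟨ha, by simp [hW.nonneg], hc, hb'W⟩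
    · exact blockCons_mem_congruenceSet_iff.2
        ⟨by simp [hW.nonneg], hr', by simp [hW.nonneg], hu'W⟩
    · rw [blockCons_mul, ← hbu]
      simp [smul_smul, mul_inv_cancel₀ ha0]

theorem exists_upperUnip_mul_lowerTri {W : Matrix (Fin n) (Fin n) ℝ} (hW : IsCongruenceWeight W)
    {g : Matrix (Fin n) (Fin n) K} (hg : g ∈ congruenceSet K W) :
    ∃ u b : Matrix (Fin n) (Fin n) K, (u ∈ congruenceSet K W ∧ IsUpperUnip u) ∧
      (b ∈ congruenceSet K W ∧ IsLowerTri b) ∧ g = u * b := by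
  obtain ⟨b, u, ⟨hbW, hb⟩, ⟨huW, hu⟩, hbu⟩ :=
    exists_lowerTri_mul_upperUnip hW.antitranspose (antitranspose_mem_congruenceSet hg)
  refine ⟨u.antitranspose, b.antitranspose, ⟨?_, hu.antitranspose⟩, ⟨?_, hb.antitranspose⟩, ?_⟩
  · simpa using antitranspose_mem_congruenceSet huW
  · simpa using antitranspose_mem_congruenceSet hbW
  · rw [← antitranspose_mul, ← hbu, antitranspose_antitranspose]

theorem exists_lowerUnip_mul_diag {W : Matrix (Fin n) (Fin n) ℝ} (hW : IsCongruenceWeight W)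
    {b : Matrix (Fin n) (Fin n) K} (hbW : b ∈ congruenceSet K W) (hb : IsLowerTri b) :
    ∃ v a : Matrix (Fin n) (Fin n) K, (v ∈ congruenceSet K W ∧ IsLowerUnip v) ∧
      (a ∈ congruenceSet K W ∧ IsDiagMat a) ∧ b = v * a := by
  have hb0 := apply_ne_zero_of_mem_congruenceSet hW hbW
  have hbW_diag (i : Fin n) : ‖b i i - 1‖ ≤ W i i := by simpa using hbW i i
  have hinvW (i : Fin n) : ‖(b i i)⁻¹ - 1‖ ≤ W i i := by
    rw [show (b i i)⁻¹ - 1 = -((b i i)⁻¹ * (b i i - 1)) by field_simp [hb0 i]; ring, norm_neg,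
      norm_mul, norm_inv, norm_apply_eq_one_of_mem_congruenceSet hW hbW, inv_one, one_mul]
    exact hbW_diag i
  refine ⟨b * diagonal fun i => (b i i)⁻¹, diagonal fun i => b i i,
    ⟨mul_mem_congruenceSet hW hbW (diagonal_mem_congruenceSet hW hinvW), ?_, ?_⟩,
    ⟨diagonal_mem_congruenceSet hW hbW_diag, fun i j hij => diagonal_apply_ne _ hij⟩, ?_⟩
  · intro i j hij
    rw [mul_diagonal, hb i j hij, zero_mul]
  · intro i
    rw [mul_diagonal, mul_inv_cancel₀ (hb0 i)]
  · rw [Matrix.mul_assoc, diagonal_mul_diagonal]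
    simp [inv_mul_cancel₀ (hb0 _)]

end NormedField

noncomputable def jmWeight (p n m : ℕ) : Matrix (Fin n) (Fin n) ℝ :=
  of fun i j => (p : ℝ) ^ (-(m : ℤ) * (1 + 2 * ((i : ℤ) - j)))

section Padic

variable {p : ℕ} [Fact p.Prime] {n m : ℕ}

lemma isCongruenceWeight_jmWeight (hm : 1 ≤ m) : IsCongruenceWeight (jmWeight p n m) := by
  have hp : (1 : ℝ) < p := by exact_mod_cast (Fact.out : p.Prime).one_lt
  refine ⟨fun i j => by simp only [jmWeight, of_apply]; positivity, fun i l j => ?_, fun i => ?_⟩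
  · simp only [jmWeight, of_apply, ← zpow_add₀ (zero_lt_one.trans hp).ne']
    exact zpow_le_zpow_right₀ hp.le (by nlinarith)
  · exact zpow_lt_one_of_neg₀ hp (by simp; omega)

lemma dpow_mul_dpow (s t : ℤ) : dpow p n s * dpow p n t = dpow p n (s + t) := by
  have hp : (p : ℚ_[p]) ≠ 0 := by exact_mod_cast (Fact.out : p.Prime).ne_zero
  simp only [dpow, diagonal_mul_diagonal, ← zpow_add₀ hp, mul_add]

lemma dpow_zero : dpow p n 0 = 1 := by
  simp [dpow]

lemma dpow_mul_mul_dpow_cancel {s t : ℤ} (hst : s + t = 0) (g : Matrix (Fin n) (Fin n) ℚ_[p]) :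
    dpow p n s * (dpow p n t * g * dpow p n s) * dpow p n t = g := by
  simp only [← Matrix.mul_assoc, dpow_mul_dpow, hst, dpow_zero, Matrix.one_mul]
  rw [Matrix.mul_assoc, dpow_mul_dpow, hst, dpow_zero, Matrix.mul_one]

lemma norm_dpow_mul_mul_dpow_apply (s : ℤ) (x : Matrix (Fin n) (Fin n) ℚ_[p]) (i j : Fin n) :
    ‖(dpow p n s * x * dpow p n (-s)) i j‖ = ‖x i j‖ * (p : ℝ) ^ (2 * s * ((j : ℤ) - i)) := by
  have hp : (p : ℝ) ≠ 0 := by exact_mod_cast (Fact.out : p.Prime).ne_zero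
  simp only [dpow, diagonal_mul, mul_diagonal, norm_mul, Padic.norm_p_zpow]
  rw [mul_right_comm, ← zpow_add₀ hp, mul_comm]
  ring_nf

lemma mem_Jm_iff {g : Matrix (Fin n) (Fin n) ℚ_[p]} :
    g ∈ Jm p n m ↔ dpow p n (-(m : ℤ)) * g * dpow p n (-(-(m : ℤ))) ∈ Km p n m := by
  rw [neg_neg]
  constructor
  · rintro ⟨k, hk, rfl⟩
    rwa [dpow_mul_mul_dpow_cancel (neg_add_cancel _)]
  · exact fun hg => ⟨_, hg, dpow_mul_mul_dpow_cancel (add_neg_cancel _) g⟩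

theorem Jm_eq_congruenceSet : Jm p n m = congruenceSet ℚ_[p] (jmWeight p n m) := by
  have hp : (0 : ℝ) < p := by exact_mod_cast (Fact.out : p.Prime).pos
  ext g
  have hsub : dpow p n (-(m : ℤ)) * g * dpow p n (-(-(m : ℤ))) - 1
      = dpow p n (-(m : ℤ)) * (g - 1) * dpow p n (-(-(m : ℤ))) := by
    rw [Matrix.mul_sub, Matrix.sub_mul, Matrix.mul_one, dpow_mul_dpow, add_neg_cancel, dpow_zero]
  rw [mem_Jm_iff]
  refine forall₂_congr fun i j => ?_
  rw [← Matrix.sub_apply, hsub, norm_dpow_mul_mul_dpow_apply, ← le_div_iff₀ (by positivity),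
    ← zpow_sub₀ hp.ne']
  simp only [jmWeight, of_apply]
  ring_nf

end Padic

theorem stmt_13_general (p : ℕ) [Fact p.Prime] (n m : ℕ) (hm : 1 ≤ m) :
    (∀ j : Matrix (Fin n) (Fin n) ℚ_[p], j ∈ Jm p n m ↔
      ∃ nb a u : Matrix (Fin n) (Fin n) ℚ_[p],
        (nb ∈ Jm p n m ∧ IsLowerUnip nb) ∧
        (a ∈ Jm p n m ∧ IsDiagMat a) ∧
        (u ∈ Jm p n m ∧ IsUpperUnip u) ∧ j = nb * a * u) ∧
    (∀ j : Matrix (Fin n) (Fin n) ℚ_[p], j ∈ Jm p n m ↔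
      ∃ b u : Matrix (Fin n) (Fin n) ℚ_[p],
        (b ∈ Jm p n m ∧ IsLowerTri b) ∧ (u ∈ Jm p n m ∧ IsUpperUnip u) ∧ j = b * u) ∧
    (∀ j : Matrix (Fin n) (Fin n) ℚ_[p], j ∈ Jm p n m ↔
      ∃ u b : Matrix (Fin n) (Fin n) ℚ_[p],
        (u ∈ Jm p n m ∧ IsUpperUnip u) ∧ (b ∈ Jm p n m ∧ IsLowerTri b) ∧ j = u * b) ∧
    ∀ b₁ u₁ b₂ u₂ : Matrix (Fin n) (Fin n) ℚ_[p],
      b₁ ∈ Jm p n m → IsLowerTri b₁ → u₁ ∈ Jm p n m → IsUpperUnip u₁ →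
      b₂ ∈ Jm p n m → IsLowerTri b₂ → u₂ ∈ Jm p n m → IsUpperUnip u₂ →
      b₁ * u₁ = b₂ * u₂ → b₁ = b₂ ∧ u₁ = u₂ := by
  have hW : IsCongruenceWeight (jmWeight p n m) := isCongruenceWeight_jmWeight hm
  have hmul {g h : Matrix (Fin n) (Fin n) ℚ_[p]} := mul_mem_congruenceSet (g := g) (h := h) hW
  rw [Jm_eq_congruenceSet]
  refine ⟨fun j => ⟨fun hj => ?_, ?_⟩, fun j => ⟨exists_lowerTri_mul_upperUnip hW, ?_⟩,
    fun j => ⟨exists_upperUnip_mul_lowerTri hW, ?_⟩, ?_⟩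
  · obtain ⟨b, u, ⟨hbW, hb⟩, hu, rfl⟩ := exists_lowerTri_mul_upperUnip hW hj
    obtain ⟨v, a, hv, ha, rfl⟩ := exists_lowerUnip_mul_diag hW hbW hb
    exact ⟨v, a, u, hv, ha, hu, rfl⟩
  · rintro ⟨v, a, u, ⟨hv, -⟩, ⟨ha, -⟩, ⟨hu, -⟩, rfl⟩
    exact hmul (hmul hv ha) hu
  · rintro ⟨b, u, ⟨hb, -⟩, ⟨hu, -⟩, rfl⟩
    exact hmul hb hu
  · rintro ⟨u, b, ⟨hu, -⟩, ⟨hb, -⟩, rfl⟩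
    exact hmul hu hb
  · intro b₁ u₁ b₂ u₂ _ hb₁ _ hu₁ hb₂W hb₂ _ hu₂ h
    exact lowerTri_mul_upperUnip_inj hb₁ hb₂ (apply_ne_zero_of_mem_congruenceSet hW hb₂W)
      hu₁ hu₂ h

/-- Iwahori factorization `J_m = N̄_m A_m N_m = B̄_m N_m = N_m B̄_m`, with uniqueness of
the expression `j = b̄ n`, `b̄ ∈ B̄_m`, `n ∈ N_m`. -/
theorem stmt_13 (p : ℕ) [Fact p.Prime] (n m : ℕ) (hn : 1 ≤ n) (hm : 1 ≤ m) :
    (∀ j : Matrix (Fin n) (Fin n) ℚ_[p], j ∈ Jm p n m ↔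
      ∃ nb a u : Matrix (Fin n) (Fin n) ℚ_[p],
        (nb ∈ Jm p n m ∧ IsLowerUnip nb) ∧
        (a ∈ Jm p n m ∧ IsDiagMat a) ∧
        (u ∈ Jm p n m ∧ IsUpperUnip u) ∧ j = nb * a * u) ∧
    (∀ j : Matrix (Fin n) (Fin n) ℚ_[p], j ∈ Jm p n m ↔
      ∃ b u : Matrix (Fin n) (Fin n) ℚ_[p],
        (b ∈ Jm p n m ∧ IsLowerTri b) ∧ (u ∈ Jm p n m ∧ IsUpperUnip u) ∧ j = b * u) ∧
    (∀ j : Matrix (Fin n) (Fin n) ℚ_[p], j ∈ Jm p n m ↔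
      ∃ u b : Matrix (Fin n) (Fin n) ℚ_[p],
        (u ∈ Jm p n m ∧ IsUpperUnip u) ∧ (b ∈ Jm p n m ∧ IsLowerTri b) ∧ j = u * b) ∧
    ∀ b₁ u₁ b₂ u₂ : Matrix (Fin n) (Fin n) ℚ_[p],
      b₁ ∈ Jm p n m → IsLowerTri b₁ → u₁ ∈ Jm p n m → IsUpperUnip u₁ →
      b₂ ∈ Jm p n m → IsLowerTri b₂ → u₂ ∈ Jm p n m → IsUpperUnip u₂ →
      b₁ * u₁ = b₂ * u₂ → b₁ = b₂ ∧ u₁ = u₂ :=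
  stmt_13_general p n m hm
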